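/- Assume the DG mesh setup below. Let M, K, B be m×m real antisymmetric matrices, A an m×m real symmetric matrix, and S : ℝ^m → ℝ continuously differentiable. Suppose the ℝ^m-valued mesh function z_h satisfies the semi-discrete DG scheme. Then the total discrete energy 𝓔_h(t) = Σ_{j=1}^N ∫_{I_j} ( S(z_h) − (1/2)(K ∂_x z_h)·z_h ) dx + (1/2) Σ_{j=1}^N ( (K{z_h} + A[z_h])·[z_h] )_{j+1/2} is constant in time: d𝓔_h/dt = 0 for all t ∈ ℝ. -/

import Mathlib

open Matrix MeasureTheory

/-- `f : ℝ → ℝ` is (globally) a polynomial of degree at most `k`. -/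
def IsPolyDegLE (k : ℕ) (f : ℝ → ℝ) : Prop :=
  ∃ p : Polynomial ℝ, p.natDegree ≤ k ∧ ∀ x : ℝ, f x = Polynomial.eval x p

/-- Index of the left interface of cell `j` (periodic, with `N` cells): the interface
`x_{j−1/2}` is interface number `(j + N − 1) % N` where interface `i` sits at node `i+1`. -/
def lidx (N j : ℕ) : ℕ := (j + N - 1) % N

/-- Left trace `v⁻` of a mesh function at interface `j` (located at node `xs (j+1)`). -/
noncomputable def trLv {m : ℕ} (xs : ℕ → ℝ) (z : ℕ → ℝ → ℝ → Fin m → ℝ)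
    (j : ℕ) (t : ℝ) : Fin m → ℝ :=
  z j t (xs (j + 1))

/-- Right trace `v⁺` of a mesh function at interface `j`, periodic with `N` cells:
the value of cell `(j+1) % N` at its left endpoint. -/
noncomputable def trRv {m : ℕ} (N : ℕ) (xs : ℕ → ℝ) (z : ℕ → ℝ → ℝ → Fin m → ℝ)
    (j : ℕ) (t : ℝ) : Fin m → ℝ :=
  z ((j + 1) % N) t (xs ((j + 1) % N))

/-- Jump `[v] = v⁺ − v⁻` at interface `j`. -/
noncomputable def jmpv {m : ℕ} (N : ℕ) (xs : ℕ → ℝ) (z : ℕ → ℝ → ℝ → Fin m → ℝ)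
    (j : ℕ) (t : ℝ) : Fin m → ℝ :=
  trRv N xs z j t - trLv xs z j t

/-- Average `{v} = (v⁺ + v⁻)/2` at interface `j`. -/
noncomputable def avgv {m : ℕ} (N : ℕ) (xs : ℕ → ℝ) (z : ℕ → ℝ → ℝ → Fin m → ℝ)
    (j : ℕ) (t : ℝ) : Fin m → ℝ :=
  (1/2 : ℝ) • (trRv N xs z j t + trLv xs z j t)

/-- The numerical flux `K̂v = K{v} + A[v] + B ∂ₜ[v]` at interface `j`. -/
noncomputable def numFluxv {m : ℕ} (N : ℕ) (xs : ℕ → ℝ)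
    (K A B : Matrix (Fin m) (Fin m) ℝ) (z : ℕ → ℝ → ℝ → Fin m → ℝ)
    (j : ℕ) (t : ℝ) : Fin m → ℝ :=
  K.mulVec (avgv N xs z j t) + A.mulVec (jmpv N xs z j t)
    + B.mulVec (deriv (fun s => jmpv N xs z j s) t)

/-- An `ℝ^m`-valued mesh function: in each cell, smooth in `t` and, for each `t`,
componentwise a polynomial of degree at most `k` in `x`. -/
def IsMeshFun {m : ℕ} (N k : ℕ) (z : ℕ → ℝ → ℝ → Fin m → ℝ) : Prop :=
  (∀ j < N, ∀ (t : ℝ) (i : Fin m), IsPolyDegLE k (fun x => z j t x i)) ∧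
  (∀ j < N, ∀ (x : ℝ) (i : Fin m), ContDiff ℝ (⊤ : ℕ∞) (fun t => z j t x i))

/-- The gradient of `S : ℝ^m → ℝ`, as the vector of partial derivatives. -/
noncomputable def gradS {m : ℕ} (S : (Fin m → ℝ) → ℝ) (v : Fin m → ℝ) : Fin m → ℝ :=
  fun i => fderiv ℝ S v (Pi.single i 1)

/-- The semi-discrete DG scheme for `M zₜ + K zₓ = ∇S(z)` with numerical flux
`K̂z = K{z} + A[z] + B ∂ₜ[z]` and gradient function `gS`. -/
def SatisfiesDG {m : ℕ} (N k : ℕ) (xs : ℕ → ℝ)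
    (M K A B : Matrix (Fin m) (Fin m) ℝ)
    (gS : (Fin m → ℝ) → Fin m → ℝ) (z : ℕ → ℝ → ℝ → Fin m → ℝ) : Prop :=
  ∀ j < N, ∀ t : ℝ, ∀ φ : ℝ → Fin m → ℝ, (∀ i, IsPolyDegLE k (fun x => φ x i)) →
    (∫ x in (xs j)..(xs (j+1)), M.mulVec (deriv (fun s => z j s x) t) ⬝ᵥ φ x)
      - (∫ x in (xs j)..(xs (j+1)), K.mulVec (z j t x) ⬝ᵥ deriv φ x)
      + numFluxv N xs K A B z j t ⬝ᵥ φ (xs (j+1))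
      - numFluxv N xs K A B z (lidx N j) t ⬝ᵥ φ (xs j)
    = ∫ x in (xs j)..(xs (j+1)), gS (z j t x) ⬝ᵥ φ x

/-- `𝓕(z,ž) = {(Kz)·ž} − K̂z·{ž} + K̂ž·{z}` at interface `j`. -/
noncomputable def calF {m : ℕ} (N : ℕ) (xs : ℕ → ℝ)
    (K A B : Matrix (Fin m) (Fin m) ℝ)
    (z zv : ℕ → ℝ → ℝ → Fin m → ℝ) (j : ℕ) (t : ℝ) : ℝ :=
  ((K.mulVec (trRv N xs z j t) ⬝ᵥ trRv N xs zv j t)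
      + (K.mulVec (trLv xs z j t) ⬝ᵥ trLv xs zv j t)) / 2
    - numFluxv N xs K A B z j t ⬝ᵥ avgv N xs zv j t
    + numFluxv N xs K A B zv j t ⬝ᵥ avgv N xs z j t

noncomputable def Lb (k r : ℕ) : Polynomial ℝ :=
  Lagrange.basis (Finset.range (k+1)) (fun n : ℕ => (n : ℝ)) r

lemma injOn_nodes (k : ℕ) : Set.InjOn (fun n : ℕ => (n:ℝ)) (Finset.range (k+1)) :=
  fun _ _ _ _ h => Nat.cast_injective h

lemma polyRep {k : ℕ} {f : ℝ → ℝ} (hf : IsPolyDegLE k f) (x : ℝ) :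
    f x = ∑ r ∈ Finset.range (k+1), f r * (Lb k r).eval x := by
  obtain ⟨p, hdeg, hev⟩ := hf
  have hlt : p.degree < (Finset.range (k+1)).card := by
    rw [Finset.card_range]
    calc p.degree ≤ p.natDegree := Polynomial.degree_le_natDegree
    _ < ((k+1 : ℕ) : WithBot ℕ) := by exact_mod_cast Nat.lt_succ_of_le hdeg
  have h2 := Lagrange.eq_interpolate (injOn_nodes k) hlt
  have h3 := congrArg (fun q => Polynomial.eval x q) h2
  rw [hev x, h3, Lagrange.interpolate_apply, Polynomial.eval_finset_sum]
  refine Finset.sum_congr rfl fun r hr => ?_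
  simp [Lb, hev]

lemma isPolyDegLE_comb {k : ℕ} (c : ℕ → ℝ) :
    IsPolyDegLE k (fun x => ∑ r ∈ Finset.range (k+1), c r * (Lb k r).eval x) := by
  refine ⟨∑ r ∈ Finset.range (k+1), Polynomial.C (c r) * Lb k r, ?_, ?_⟩
  · refine Polynomial.natDegree_sum_le_of_forall_le _ _ fun r hr => ?_
    refine le_trans (Polynomial.natDegree_C_mul_le _ _) ?_
    rw [Lb, Lagrange.natDegree_basis (injOn_nodes k) hr]
    simp
  · intro x; rw [Polynomial.eval_finset_sum]; simp

section Derivs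
variable {m : ℕ}

lemma skew_dot {K : Matrix (Fin m) (Fin m) ℝ} (hK : Kᵀ = -K)
    (u v : Fin m → ℝ) : K.mulVec u ⬝ᵥ v = -(K.mulVec v ⬝ᵥ u) := by
  rw [dotProduct_comm, dotProduct_mulVec, ← mulVec_transpose, hK, neg_mulVec, neg_dotProduct]

lemma sym_dot {A : Matrix (Fin m) (Fin m) ℝ} (hA : Aᵀ = A)
    (u v : Fin m → ℝ) : A.mulVec u ⬝ᵥ v = A.mulVec v ⬝ᵥ u := by
  rw [dotProduct_comm, dotProduct_mulVec, ← mulVec_transpose, hA]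

lemma skew_dot_self {K : Matrix (Fin m) (Fin m) ℝ} (hK : Kᵀ = -K)
    (u : Fin m → ℝ) : K.mulVec u ⬝ᵥ u = 0 := by
  have := skew_dot hK u u; linarith

lemma hasDerivAt_mulVec_dot {A : Matrix (Fin m) (Fin m) ℝ}
    {u v : ℝ → Fin m → ℝ} {u' v' : Fin m → ℝ} {t : ℝ}
    (hu : ∀ i, HasDerivAt (fun s => u s i) (u' i) t)
    (hv : ∀ i, HasDerivAt (fun s => v s i) (v' i) t) :
    HasDerivAt (fun s => A.mulVec (u s) ⬝ᵥ v s)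
      (A.mulVec u' ⬝ᵥ v t + A.mulVec (u t) ⬝ᵥ v') t := by
  have h : ∀ s, A.mulVec (u s) ⬝ᵥ v s = ∑ i, (∑ l, A i l * u s l) * v s i := fun s => rfl
  simp only [h]
  have : HasDerivAt (fun s => ∑ i, (∑ l, A i l * u s l) * v s i)
      (∑ i, ((∑ l, A i l * u' l) * v t i + (∑ l, A i l * u t l) * v' i)) t := by
    refine HasDerivAt.fun_sum fun i _ => ?_
    exact ((HasDerivAt.fun_sum fun l _ => (hu l).const_mul (A i l)).mul (hv i))
  convert this using 1
  rw [Finset.sum_add_distrib]; rfl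

lemma cont_mulVec_dot {E : Type*} [TopologicalSpace E] {A : Matrix (Fin m) (Fin m) ℝ}
    {u v : E → Fin m → ℝ}
    (hu : ∀ i, Continuous fun p => u p i) (hv : ∀ i, Continuous fun p => v p i) :
    Continuous fun p => A.mulVec (u p) ⬝ᵥ v p := by
  have h : ∀ p, A.mulVec (u p) ⬝ᵥ v p = ∑ i, (∑ l, A i l * u p l) * v p i := fun p => rfl
  simp only [h]
  exact continuous_finset_sum _ fun i _ =>
    (continuous_finset_sum _ fun l _ => (continuous_const.mul (hu l))).mul (hv i)

lemma contDiff_mulVec_dot {E : Type*} [NormedAddCommGroup E] [NormedSpace ℝ E]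
    {A : Matrix (Fin m) (Fin m) ℝ} {u v : E → Fin m → ℝ}
    (hu : ∀ i, ContDiff ℝ 1 fun p => u p i) (hv : ∀ i, ContDiff ℝ 1 fun p => v p i) :
    ContDiff ℝ 1 fun p => A.mulVec (u p) ⬝ᵥ v p := by
  have h : ∀ p, A.mulVec (u p) ⬝ᵥ v p = ∑ i, (∑ l, A i l * u p l) * v p i := fun p => rfl
  simp only [h]
  exact ContDiff.sum fun i _ =>
    (ContDiff.sum fun l _ => (contDiff_const.mul (hu l))).mul (hv i)

lemma gradS_dot {S : (Fin m → ℝ) → ℝ} (v w : Fin m → ℝ) :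
    gradS S v ⬝ᵥ w = fderiv ℝ S v w := by
  have hw : w = ∑ i, w i • (Pi.single i (1:ℝ) : Fin m → ℝ) := by
    funext i'
    simp [Finset.sum_apply, Pi.single_apply]
  calc gradS S v ⬝ᵥ w = ∑ i, w i * fderiv ℝ S v (Pi.single i 1) := by
        simp [gradS, dotProduct, mul_comm]
    _ = fderiv ℝ S v (∑ i, w i • (Pi.single i (1:ℝ) : Fin m → ℝ)) := by
        rw [map_sum]
        refine Finset.sum_congr rfl fun i _ => ?_
        rw [_root_.map_smul]; simp [mul_comm]
    _ = fderiv ℝ S v w := by rw [← hw]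
end Derivs

-- mod-index lemmas
lemma lidx_lt {N : ℕ} (hN : 0 < N) (j : ℕ) : lidx N j < N := Nat.mod_lt _ hN
lemma succ_mod_lt {N : ℕ} (hN : 0 < N) (j : ℕ) : (j+1) % N < N := Nat.mod_lt _ hN

lemma lidx_succ {N j : ℕ} (hN : 0 < N) (hj : j < N) : (lidx N j + 1) % N = j := by
  unfold lidx
  rcases Nat.eq_zero_or_pos j with h0 | h0
  · subst h0
    have h1 : (0 + N - 1) % N = N - 1 := by
      rw [Nat.zero_add]; exact Nat.mod_eq_of_lt (by omega)
    rw [h1]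
    have h2 : N - 1 + 1 = N := by omega
    rw [h2, Nat.mod_self]
  · have h1 : j + N - 1 = (j-1) + N := by omega
    rw [h1, Nat.add_mod_right]
    have h2 : (j-1) % N = j - 1 := Nat.mod_eq_of_lt (by omega)
    rw [h2]
    have h3 : j - 1 + 1 = j := by omega
    rw [h3, Nat.mod_eq_of_lt hj]

lemma succ_lidx {N j : ℕ} (hN : 0 < N) (hj : j < N) : lidx N ((j+1) % N) = j := by
  unfold lidx
  rcases Nat.lt_or_ge (j+1) N with h | h
  · rw [Nat.mod_eq_of_lt h]
    have h1 : j + 1 + N - 1 = j + N := by omega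
    rw [h1, Nat.add_mod_right, Nat.mod_eq_of_lt hj]
  · have hjN : j + 1 = N := by omega
    rw [hjN, Nat.mod_self]
    have h1 : (0 + N - 1) % N = N - 1 := by
      rw [Nat.zero_add]; exact Nat.mod_eq_of_lt (by omega)
    rw [Nat.zero_add] at h1 ⊢
    rw [h1]
    omega

section Mesh
variable {m N k : ℕ} {z : ℕ → ℝ → ℝ → Fin m → ℝ}

lemma contDiff_polyEval (p : Polynomial ℝ) : ContDiff ℝ 1 fun x : ℝ => p.eval x := by
  have h : (fun x : ℝ => p.eval x)
      = fun x => ∑ i ∈ Finset.range (p.natDegree + 1), p.coeff i * x ^ i :=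
    funext fun x => Polynomial.eval_eq_sum_range _
  rw [h]; exact ContDiff.sum fun i _ => contDiff_const.mul (contDiff_id.pow i)

noncomputable def ztD (k : ℕ) (z : ℕ → ℝ → ℝ → Fin m → ℝ) (j : ℕ) (t x : ℝ) : Fin m → ℝ :=
  fun i => ∑ r ∈ Finset.range (k+1), deriv (fun s => z j s (r:ℝ) i) t * (Lb k r).eval x

noncomputable def zxD (k : ℕ) (z : ℕ → ℝ → ℝ → Fin m → ℝ) (j : ℕ) (t x : ℝ) : Fin m → ℝ :=
  fun i => ∑ r ∈ Finset.range (k+1), z j t (r:ℝ) i * (Lb k r).derivative.eval x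

noncomputable def ztxD (k : ℕ) (z : ℕ → ℝ → ℝ → Fin m → ℝ) (j : ℕ) (t x : ℝ) : Fin m → ℝ :=
  fun i => ∑ r ∈ Finset.range (k+1), deriv (fun s => z j s (r:ℝ) i) t * (Lb k r).derivative.eval x

variable (hz : IsMeshFun N k z) {j : ℕ} (hj : j < N)
include hz hj

lemma rep_z (t x : ℝ) (i : Fin m) :
    z j t x i = ∑ r ∈ Finset.range (k+1), z j t (r:ℝ) i * (Lb k r).eval x :=
  polyRep (hz.1 j hj t i) x

lemma hasDerivAt_zt (t x : ℝ) (i : Fin m) :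
    HasDerivAt (fun s => z j s x i) (ztD k z j t x i) t := by
  have hrep : (fun s => z j s x i)
      = fun s => ∑ r ∈ Finset.range (k+1), z j s (r:ℝ) i * (Lb k r).eval x :=
    funext fun s => rep_z hz hj s x i
  rw [hrep]
  exact HasDerivAt.fun_sum fun r _ =>
    (((hz.2 j hj (r:ℝ) i).differentiable (by simp)) t).hasDerivAt.mul_const _

lemma hasDerivAt_zt_pi (t x : ℝ) :
    HasDerivAt (fun s => z j s x) (ztD k z j t x) t :=
  hasDerivAt_pi.2 fun i => hasDerivAt_zt hz hj t x i

lemma deriv_zt (t x : ℝ) : deriv (fun s => z j s x) t = ztD k z j t x :=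
  (hasDerivAt_zt_pi hz hj t x).deriv

lemma hasDerivAt_zx (t x : ℝ) (i : Fin m) :
    HasDerivAt (fun y => z j t y i) (zxD k z j t x i) x := by
  have hrep : (fun y => z j t y i)
      = fun y => ∑ r ∈ Finset.range (k+1), z j t (r:ℝ) i * (Lb k r).eval y :=
    funext fun y => rep_z hz hj t y i
  rw [hrep]
  exact HasDerivAt.fun_sum fun r _ => ((Lb k r).hasDerivAt x).const_mul _

lemma deriv_zx (t x : ℝ) : deriv (fun y => z j t y) x = zxD k z j t x :=
  (hasDerivAt_pi.2 fun i => hasDerivAt_zx hz hj t x i).deriv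

lemma cont_z (t : ℝ) (i : Fin m) : Continuous fun x => z j t x i := by
  have hrep : (fun x => z j t x i)
      = fun x => ∑ r ∈ Finset.range (k+1), z j t (r:ℝ) i * (Lb k r).eval x :=
    funext fun x => rep_z hz hj t x i
  rw [hrep]
  exact continuous_finset_sum _ fun r _ => continuous_const.mul (Lb k r).continuous

omit hz hj

lemma hasDerivAt_ztx_x (t x : ℝ) (i : Fin m) :
    HasDerivAt (fun y => ztD k z j t y i) (ztxD k z j t x i) x :=
  HasDerivAt.fun_sum fun r _ => ((Lb k r).hasDerivAt x).const_mul _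

lemma deriv_zt_x (t x : ℝ) :
    deriv (fun y => ztD k z j t y) x = ztxD k z j t x :=
  (hasDerivAt_pi.2 fun i => hasDerivAt_ztx_x t x i).deriv

include hz hj in
lemma hasDerivAt_zx_t (t x : ℝ) (i : Fin m) :
    HasDerivAt (fun s => zxD k z j s x i) (ztxD k z j t x i) t :=
  HasDerivAt.fun_sum fun r _ =>
    (((hz.2 j hj (r:ℝ) i).differentiable (by simp)) t).hasDerivAt.mul_const _

lemma poly_zt (t : ℝ) (i : Fin m) : IsPolyDegLE k fun x => ztD k z j t x i :=
  isPolyDegLE_comb _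

lemma cont_zt (t : ℝ) (i : Fin m) : Continuous fun x => ztD k z j t x i :=
  continuous_finset_sum _ fun r _ => continuous_const.mul (Lb k r).continuous

lemma cont_zx (t : ℝ) (i : Fin m) : Continuous fun x => zxD k z j t x i :=
  continuous_finset_sum _ fun r _ => continuous_const.mul (Lb k r).derivative.continuous

lemma cont_ztx (t : ℝ) (i : Fin m) : Continuous fun x => ztxD k z j t x i :=
  continuous_finset_sum _ fun r _ => continuous_const.mul (Lb k r).derivative.continuous

include hz hj in
lemma contDiff_z_joint (i : Fin m) : ContDiff ℝ 1 fun p : ℝ × ℝ => z j p.1 p.2 i := by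
  have hrep : (fun p : ℝ × ℝ => z j p.1 p.2 i)
      = fun p : ℝ × ℝ => ∑ r ∈ Finset.range (k+1), z j p.1 (r:ℝ) i * (Lb k r).eval p.2 :=
    funext fun p => rep_z hz hj p.1 p.2 i
  rw [hrep]
  exact ContDiff.sum fun r _ =>
    (((hz.2 j hj (r:ℝ) i).of_le (by simp)).comp contDiff_fst).mul
      ((contDiff_polyEval (Lb k r)).comp contDiff_snd)

include hz hj in
lemma contDiff_zx_joint (i : Fin m) : ContDiff ℝ 1 fun p : ℝ × ℝ => zxD k z j p.1 p.2 i := by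
  exact ContDiff.sum fun r _ =>
    (((hz.2 j hj (r:ℝ) i).of_le (by simp)).comp contDiff_fst).mul
      ((contDiff_polyEval (Lb k r).derivative).comp contDiff_snd)

end Mesh

lemma key_alg {m : ℕ} {K A B : Matrix (Fin m) (Fin m) ℝ}
    (hK : Kᵀ = -K) (hA : Aᵀ = A) (hB : Bᵀ = -B) (p q pt qt : Fin m → ℝ) :
    (1/2) * (K.mulVec qt ⬝ᵥ q) - (1/2) * (K.mulVec pt ⬝ᵥ p)
      + (K.mulVec ((1/2:ℝ) • (p + q)) + A.mulVec (p - q) + B.mulVec (pt - qt)) ⬝ᵥ qt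
      - (K.mulVec ((1/2:ℝ) • (p + q)) + A.mulVec (p - q) + B.mulVec (pt - qt)) ⬝ᵥ pt
      + (1/2) * (K.mulVec ((1/2:ℝ) • (pt + qt)) ⬝ᵥ (p - q)
          + K.mulVec ((1/2:ℝ) • (p + q)) ⬝ᵥ (pt - qt)
          + (A.mulVec (pt - qt) ⬝ᵥ (p - q) + A.mulVec (p - q) ⬝ᵥ (pt - qt))) = 0 := by
  simp only [Matrix.mulVec_add, Matrix.mulVec_sub, Matrix.mulVec_smul,
    add_dotProduct, sub_dotProduct, smul_dotProduct,
    dotProduct_add, dotProduct_sub, dotProduct_smul,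
    smul_eq_mul]
  simp only [skew_dot hK p qt, skew_dot hK p pt, skew_dot hK q qt, skew_dot hK q pt,
    sym_dot hA p pt, sym_dot hA p qt, sym_dot hA q pt, sym_dot hA q qt,
    skew_dot_self hB pt, skew_dot_self hB qt, skew_dot hB pt qt]
  ring

lemma cont_dot {m : ℕ} {E : Type*} [TopologicalSpace E] {u v : E → Fin m → ℝ}
    (hu : ∀ i, Continuous fun p => u p i) (hv : ∀ i, Continuous fun p => v p i) :
    Continuous fun p => u p ⬝ᵥ v p := by
  have h : ∀ p, u p ⬝ᵥ v p = ∑ i, u p i * v p i := fun p => rfl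
  simp only [h]
  exact continuous_finset_sum _ fun i _ => (hu i).mul (hv i)

open intervalIntegral Metric in
lemma hasDerivAt_intInt {H Ht : ℝ → ℝ → ℝ}
    (h : ContDiff ℝ 1 fun p : ℝ × ℝ => H p.1 p.2)
    (hHt : ∀ s x, HasDerivAt (fun u => H u x) (Ht s x) s)
    (a b t : ℝ) :
    HasDerivAt (fun s => ∫ x in a..b, H s x) (∫ x in a..b, Ht t x) t := by
  have hHcont : Continuous fun p : ℝ × ℝ => H p.1 p.2 := h.continuous
  have hfd : ∀ p : ℝ × ℝ, Ht p.1 p.2 = fderiv ℝ (fun p : ℝ × ℝ => H p.1 p.2) p (1, 0) := by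
    rintro ⟨s, x⟩
    have h1 : HasDerivAt (fun u : ℝ => (u, x)) ((1 : ℝ), (0 : ℝ)) s :=
      (hasDerivAt_id s).prodMk (hasDerivAt_const s x)
    have h2 : HasFDerivAt (fun p : ℝ × ℝ => H p.1 p.2)
        (fderiv ℝ (fun p : ℝ × ℝ => H p.1 p.2) (s, x)) (s, x) :=
      (h.differentiable one_ne_zero (s, x)).hasFDerivAt
    have h3 : HasDerivAt (fun u : ℝ => H u x)
        (fderiv ℝ (fun p : ℝ × ℝ => H p.1 p.2) (s, x) (1, 0)) s :=
      by have h4 := h2.comp_hasDerivAt s h1; exact h4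
    exact h3.unique (hHt s x) ▸ rfl
  have hHtcont : Continuous fun p : ℝ × ℝ => Ht p.1 p.2 := by
    have hc : Continuous fun p : ℝ × ℝ => fderiv ℝ (fun p : ℝ × ℝ => H p.1 p.2) p (1, 0) :=
      (h.continuous_fderiv one_ne_zero).clm_apply continuous_const
    exact hc.congr fun p => (hfd p).symm
  obtain ⟨C, hC⟩ : ∃ C, ∀ p ∈ (Set.Icc (t-1) (t+1) ×ˢ Set.uIcc a b), |Ht p.1 p.2| ≤ C := by
    obtain ⟨C, hC⟩ := (IsCompact.exists_bound_of_continuousOn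
      ((isCompact_Icc).prod isCompact_uIcc) hHtcont.continuousOn)
    exact ⟨C, fun p hp => hC p hp⟩
  have key := intervalIntegral.hasDerivAt_integral_of_dominated_loc_of_deriv_le
    (F := H) (F' := Ht) (x₀ := t) (bound := fun _ => C) (a := a) (b := b)
    (μ := volume) (s := ball t 1) (ball_mem_nhds t one_pos)
    (Filter.Eventually.of_forall fun s =>
      ((hHcont.comp (Continuous.prodMk_right s)).aestronglyMeasurable))
    ((hHcont.comp (Continuous.prodMk_right t)).intervalIntegrable a b)
    ((hHtcont.comp (Continuous.prodMk_right t)).aestronglyMeasurable)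
    (Filter.Eventually.of_forall fun x hx s hs => by
      have hx' : x ∈ Set.uIcc a b := Set.uIoc_subset_uIcc hx
      have hs' : s ∈ Set.Icc (t-1) (t+1) := by
        have := abs_lt.1 (by simpa [Real.dist_eq] using mem_ball.1 hs)
        constructor <;> linarith [this.1, this.2]
      simpa using hC (s, x) ⟨hs', hx'⟩)
    (intervalIntegrable_const)
    (Filter.Eventually.of_forall fun x _ s _ => hHt s x)
  exact key.2

section Traces
variable {m N k : ℕ} (xs : ℕ → ℝ) (z : ℕ → ℝ → ℝ → Fin m → ℝ)

noncomputable def ptD (N k : ℕ) (xs : ℕ → ℝ) (z : ℕ → ℝ → ℝ → Fin m → ℝ)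
    (j : ℕ) (t : ℝ) : Fin m → ℝ :=
  ztD k z ((j+1) % N) t (xs ((j+1) % N))

noncomputable def qtD (k : ℕ) (xs : ℕ → ℝ) (z : ℕ → ℝ → ℝ → Fin m → ℝ)
    (j : ℕ) (t : ℝ) : Fin m → ℝ :=
  ztD k z j t (xs (j+1))

noncomputable def jtD (N k : ℕ) (xs : ℕ → ℝ) (z : ℕ → ℝ → ℝ → Fin m → ℝ)
    (j : ℕ) (t : ℝ) : Fin m → ℝ :=
  ptD N k xs z j t - qtD k xs z j t

noncomputable def atD (N k : ℕ) (xs : ℕ → ℝ) (z : ℕ → ℝ → ℝ → Fin m → ℝ)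
    (j : ℕ) (t : ℝ) : Fin m → ℝ :=
  (1/2 : ℝ) • (ptD N k xs z j t + qtD k xs z j t)

variable {z} (hz : IsMeshFun N k z) (hN : 0 < N) {j : ℕ} (hj : j < N) (t : ℝ)
include hz hN hj

lemma hasDerivAt_trR (i : Fin m) :
    HasDerivAt (fun s => trRv N xs z j s i) (ptD N k xs z j t i) t :=
  hasDerivAt_zt hz (Nat.mod_lt _ hN) t _ i

lemma hasDerivAt_trL (i : Fin m) :
    HasDerivAt (fun s => trLv xs z j s i) (qtD k xs z j t i) t :=
  hasDerivAt_zt hz hj t _ i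

lemma hasDerivAt_jmp (i : Fin m) :
    HasDerivAt (fun s => jmpv N xs z j s i) (jtD N k xs z j t i) t := by
  have := (hasDerivAt_trR xs hz hN hj t i).fun_sub (hasDerivAt_trL xs hz hN hj t i)
  simpa [jmpv, jtD] using this

lemma hasDerivAt_avg (i : Fin m) :
    HasDerivAt (fun s => avgv N xs z j s i) (atD N k xs z j t i) t := by
  have := ((hasDerivAt_trR xs hz hN hj t i).add
    (hasDerivAt_trL xs hz hN hj t i)).const_mul (1/2 : ℝ)
  simpa [avgv, atD, mul_comm] using this

lemma deriv_jmp : deriv (fun s => jmpv N xs z j s) t = jtD N k xs z j t :=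
  (hasDerivAt_pi.2 fun i => hasDerivAt_jmp xs hz hN hj t i).deriv

lemma numFluxv_eq (K A B : Matrix (Fin m) (Fin m) ℝ) :
    numFluxv N xs K A B z j t
      = K.mulVec (avgv N xs z j t) + A.mulVec (jmpv N xs z j t)
        + B.mulVec (jtD N k xs z j t) := by
  rw [numFluxv, deriv_jmp xs hz hN hj t]

lemma hasDerivAt_Qterm (K A : Matrix (Fin m) (Fin m) ℝ) :
    HasDerivAt (fun s => (K.mulVec (avgv N xs z j s) + A.mulVec (jmpv N xs z j s))
        ⬝ᵥ jmpv N xs z j s)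
      (K.mulVec (atD N k xs z j t) ⬝ᵥ jmpv N xs z j t
        + K.mulVec (avgv N xs z j t) ⬝ᵥ jtD N k xs z j t
        + (A.mulVec (jtD N k xs z j t) ⬝ᵥ jmpv N xs z j t
          + A.mulVec (jmpv N xs z j t) ⬝ᵥ jtD N k xs z j t)) t := by
  have h1 : (fun s => (K.mulVec (avgv N xs z j s) + A.mulVec (jmpv N xs z j s))
      ⬝ᵥ jmpv N xs z j s)
      = fun s => K.mulVec (avgv N xs z j s) ⬝ᵥ jmpv N xs z j s
        + A.mulVec (jmpv N xs z j s) ⬝ᵥ jmpv N xs z j s :=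
    funext fun s => add_dotProduct _ _ _
  rw [h1]
  exact (hasDerivAt_mulVec_dot (fun i => hasDerivAt_avg xs hz hN hj t i)
      (fun i => hasDerivAt_jmp xs hz hN hj t i)).add
    (hasDerivAt_mulVec_dot (fun i => hasDerivAt_jmp xs hz hN hj t i)
      (fun i => hasDerivAt_jmp xs hz hN hj t i))

end Traces

section Cell
variable {m N k : ℕ} (xs : ℕ → ℝ)
  (M K A B : Matrix (Fin m) (Fin m) ℝ)
  {S : (Fin m → ℝ) → ℝ} {z : ℕ → ℝ → ℝ → Fin m → ℝ}

lemma cellD (hN : 0 < N) (hM : Mᵀ = -M) (hK : Kᵀ = -K)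
    (hS : ContDiff ℝ 1 S) (hz : IsMeshFun N k z)
    (hscheme : SatisfiesDG N k xs M K A B (gradS S) z)
    {j : ℕ} (hj : j < N) (t : ℝ) :
    (∫ x in (xs j)..(xs (j+1)),
        (gradS S (z j t x) ⬝ᵥ ztD k z j t x
          - (1/2) * (K.mulVec (ztxD k z j t x) ⬝ᵥ z j t x
            + K.mulVec (zxD k z j t x) ⬝ᵥ ztD k z j t x)))
      = ((1/2) * (K.mulVec (ztD k z j t (xs (j+1))) ⬝ᵥ z j t (xs (j+1)))
          + numFluxv N xs K A B z j t ⬝ᵥ ztD k z j t (xs (j+1)))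
        - ((1/2) * (K.mulVec (ztD k z j t (xs j)) ⬝ᵥ z j t (xs j))
          + numFluxv N xs K A B z (lidx N j) t ⬝ᵥ ztD k z j t (xs j)) := by
  have hsch := hscheme j hj t (fun x => ztD k z j t x) (fun i => poly_zt t i)
  simp only [deriv_zt hz hj, deriv_zt_x, skew_dot_self hM,
    intervalIntegral.integral_zero, zero_sub] at hsch
  -- integrability facts
  have hIG : IntervalIntegrable (fun x => gradS S (z j t x) ⬝ᵥ ztD k z j t x)
      MeasureTheory.volume (xs j) (xs (j+1)) := by
    refine (cont_dot (fun i => ?_) (fun i => cont_zt t i)).intervalIntegrable _ _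
    exact ((hS.continuous_fderiv one_ne_zero).comp
      (continuous_pi (cont_z hz hj t))).clm_apply continuous_const
  have hI2 : IntervalIntegrable (fun x => K.mulVec (ztxD k z j t x) ⬝ᵥ z j t x)
      MeasureTheory.volume (xs j) (xs (j+1)) :=
    (cont_mulVec_dot (fun i => cont_ztx t i) (fun i => cont_z hz hj t i)).intervalIntegrable _ _
  have hI3 : IntervalIntegrable (fun x => K.mulVec (zxD k z j t x) ⬝ᵥ ztD k z j t x)
      MeasureTheory.volume (xs j) (xs (j+1)) :=
    (cont_mulVec_dot (fun i => cont_zx t i) (fun i => cont_zt t i)).intervalIntegrable _ _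
  -- skew conversions
  have c1 : ∀ x : ℝ, K.mulVec (z j t x) ⬝ᵥ ztxD k z j t x
      = -(K.mulVec (ztxD k z j t x) ⬝ᵥ z j t x) := fun x => skew_dot hK _ _
  -- rewrite the K-term in the scheme
  have e4 : (∫ x in (xs j)..(xs (j+1)), K.mulVec (z j t x) ⬝ᵥ ztxD k z j t x)
      = -∫ x in (xs j)..(xs (j+1)), K.mulVec (ztxD k z j t x) ⬝ᵥ z j t x := by
    rw [← intervalIntegral.integral_neg]
    exact intervalIntegral.integral_congr fun x _ => c1 x
  rw [e4] at hsch
  -- integration by parts identity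
  have hibp : (∫ x in (xs j)..(xs (j+1)),
        ((1/2) * (K.mulVec (ztxD k z j t x) ⬝ᵥ z j t x
          + K.mulVec (ztD k z j t x) ⬝ᵥ zxD k z j t x)))
      = (1/2) * (K.mulVec (ztD k z j t (xs (j+1))) ⬝ᵥ z j t (xs (j+1)))
        - (1/2) * (K.mulVec (ztD k z j t (xs j)) ⬝ᵥ z j t (xs j)) := by
    refine intervalIntegral.integral_eq_sub_of_hasDerivAt
      (f := fun y => (1/2 : ℝ) * (K.mulVec (ztD k z j t y) ⬝ᵥ z j t y)) (fun x _ => ?_) ?_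
    ·       exact (hasDerivAt_mulVec_dot (fun i => hasDerivAt_ztx_x t x i)
        (fun i => hasDerivAt_zx hz hj t x i)).const_mul (1/2 : ℝ)
    · refine Continuous.intervalIntegrable ?_ _ _
      exact continuous_const.mul ((cont_mulVec_dot (fun i => cont_ztx t i)
        (fun i => cont_z hz hj t i)).add (cont_mulVec_dot (fun i => cont_zt t i)
        (fun i => cont_zx t i)))
  -- convert hibp to the I2/I3 form
  have hibp2 : (1/2) * (∫ x in (xs j)..(xs (j+1)), K.mulVec (ztxD k z j t x) ⬝ᵥ z j t x)
      - (1/2) * (∫ x in (xs j)..(xs (j+1)), K.mulVec (zxD k z j t x) ⬝ᵥ ztD k z j t x)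
      = (1/2) * (K.mulVec (ztD k z j t (xs (j+1))) ⬝ᵥ z j t (xs (j+1)))
        - (1/2) * (K.mulVec (ztD k z j t (xs j)) ⬝ᵥ z j t (xs j)) := by
    rw [← hibp]
    have hptw : ∀ x : ℝ, (1/2) * (K.mulVec (ztxD k z j t x) ⬝ᵥ z j t x
          + K.mulVec (ztD k z j t x) ⬝ᵥ zxD k z j t x)
        = (1/2) * (K.mulVec (ztxD k z j t x) ⬝ᵥ z j t x)
          - (1/2) * (K.mulVec (zxD k z j t x) ⬝ᵥ ztD k z j t x) := by
      intro x
      rw [skew_dot hK (ztD k z j t x) (zxD k z j t x)]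
      ring
    rw [intervalIntegral.integral_congr (fun x _ => hptw x),
      intervalIntegral.integral_sub (hI2.const_mul _) (hI3.const_mul _),
      intervalIntegral.integral_const_mul, intervalIntegral.integral_const_mul]
  -- split the goal integral
  have hsplit : (∫ x in (xs j)..(xs (j+1)),
        (gradS S (z j t x) ⬝ᵥ ztD k z j t x
          - (1/2) * (K.mulVec (ztxD k z j t x) ⬝ᵥ z j t x
            + K.mulVec (zxD k z j t x) ⬝ᵥ ztD k z j t x)))
      = (∫ x in (xs j)..(xs (j+1)), gradS S (z j t x) ⬝ᵥ ztD k z j t x)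
        - ((1/2) * (∫ x in (xs j)..(xs (j+1)), K.mulVec (ztxD k z j t x) ⬝ᵥ z j t x)
          + (1/2) * (∫ x in (xs j)..(xs (j+1)), K.mulVec (zxD k z j t x) ⬝ᵥ ztD k z j t x)) := by
    rw [intervalIntegral.integral_sub hIG (((hI2.add hI3)).const_mul _),
      intervalIntegral.integral_const_mul, intervalIntegral.integral_add hI2 hI3]
    ring
  rw [hsplit, ← hsch]
  linarith [hibp2]

end Cell

section Joint
variable {m N k : ℕ} {K : Matrix (Fin m) (Fin m) ℝ}
  {S : (Fin m → ℝ) → ℝ} {z : ℕ → ℝ → ℝ → Fin m → ℝ}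

lemma contDiff_H (hS : ContDiff ℝ 1 S) (hz : IsMeshFun N k z) {j : ℕ} (hj : j < N) :
    ContDiff ℝ 1 fun p : ℝ × ℝ =>
      S (z j p.1 p.2) - (1/2) * (K.mulVec (zxD k z j p.1 p.2) ⬝ᵥ z j p.1 p.2) := by
  refine ContDiff.sub ?_ (contDiff_const.mul ?_)
  · exact hS.comp (contDiff_pi.2 fun i => contDiff_z_joint hz hj i)
  · exact contDiff_mulVec_dot (fun i => contDiff_zx_joint hz hj i)
      (fun i => contDiff_z_joint hz hj i)

lemma hasDerivAt_Ht (hS : ContDiff ℝ 1 S) (hz : IsMeshFun N k z) {j : ℕ} (hj : j < N)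
    (s x : ℝ) :
    HasDerivAt (fun u => S (z j u x) - (1/2) * (K.mulVec (zxD k z j u x) ⬝ᵥ z j u x))
      (gradS S (z j s x) ⬝ᵥ ztD k z j s x
        - (1/2) * (K.mulVec (ztxD k z j s x) ⬝ᵥ z j s x
          + K.mulVec (zxD k z j s x) ⬝ᵥ ztD k z j s x)) s := by
  have h1 : HasDerivAt (fun u => S (z j u x))
      (fderiv ℝ S (z j s x) (ztD k z j s x)) s :=
    (hS.differentiable one_ne_zero _).hasFDerivAt.comp_hasDerivAt s (hasDerivAt_zt_pi hz hj s x)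
  rw [← gradS_dot] at h1
  have h2 : HasDerivAt (fun u => K.mulVec (zxD k z j u x) ⬝ᵥ z j u x)
      (K.mulVec (ztxD k z j s x) ⬝ᵥ z j s x
        + K.mulVec (zxD k z j s x) ⬝ᵥ ztD k z j s x) s :=
    hasDerivAt_mulVec_dot (fun i => hasDerivAt_zx_t hz hj s x i)
      (fun i => hasDerivAt_zt hz hj s x i)
  exact h1.sub (h2.const_mul (1/2 : ℝ))

end Joint
/-- Global energy conservation (Theorem 3.2 of the paper): the total discrete energy
`𝓔_h = Σ_j ∫_{I_j} (S(z_h) − (1/2)(K ∂ₓz_h)·z_h) dx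
  + (1/2) Σ_j ((K{z_h} + A[z_h])·[z_h])_{j+1/2}` is constant in time. -/
theorem stmt8 {m N k : ℕ} (hm : 0 < m) (hN : 0 < N)
    (xs : ℕ → ℝ) (hxs : ∀ i < N, xs i < xs (i+1))
    (M K A B : Matrix (Fin m) (Fin m) ℝ)
    (hM : Mᵀ = -M) (hK : Kᵀ = -K) (hB : Bᵀ = -B) (hA : Aᵀ = A)
    (S : (Fin m → ℝ) → ℝ) (hS : ContDiff ℝ 1 S)
    (z : ℕ → ℝ → ℝ → Fin m → ℝ) (hz : IsMeshFun N k z)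
    (hscheme : SatisfiesDG N k xs M K A B (gradS S) z) :
    ∀ t : ℝ,
      deriv (fun s =>
          (∑ j ∈ Finset.range N, ∫ x in (xs j)..(xs (j+1)),
            (S (z j s x) - (1/2) * (K.mulVec (deriv (fun y => z j s y) x) ⬝ᵥ z j s x)))
          + (1/2) * ∑ j ∈ Finset.range N,
              ((K.mulVec (avgv N xs z j s) + A.mulVec (jmpv N xs z j s))
                ⬝ᵥ jmpv N xs z j s)) t = 0 := by
  intro t
  have hE : (fun s =>
      (∑ j ∈ Finset.range N, ∫ x in (xs j)..(xs (j+1)),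
        (S (z j s x) - (1/2) * (K.mulVec (deriv (fun y => z j s y) x) ⬝ᵥ z j s x)))
      + (1/2) * ∑ j ∈ Finset.range N,
          ((K.mulVec (avgv N xs z j s) + A.mulVec (jmpv N xs z j s)) ⬝ᵥ jmpv N xs z j s))
    = fun s =>
      (∑ j ∈ Finset.range N, ∫ x in (xs j)..(xs (j+1)),
        (S (z j s x) - (1/2) * (K.mulVec (zxD k z j s x) ⬝ᵥ z j s x)))
      + (1/2) * ∑ j ∈ Finset.range N,
          ((K.mulVec (avgv N xs z j s) + A.mulVec (jmpv N xs z j s)) ⬝ᵥ jmpv N xs z j s) := by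
    funext s
    congr 1
    refine Finset.sum_congr rfl fun j hj' => ?_
    exact intervalIntegral.integral_congr fun x _ => by
      rw [deriv_zx hz (Finset.mem_range.1 hj') s x]
  rw [hE]
  have hD : HasDerivAt (fun s =>
      (∑ j ∈ Finset.range N, ∫ x in (xs j)..(xs (j+1)),
        (S (z j s x) - (1/2) * (K.mulVec (zxD k z j s x) ⬝ᵥ z j s x)))
      + (1/2) * ∑ j ∈ Finset.range N,
          ((K.mulVec (avgv N xs z j s) + A.mulVec (jmpv N xs z j s)) ⬝ᵥ jmpv N xs z j s))
    ((∑ j ∈ Finset.range N, ∫ x in (xs j)..(xs (j+1)),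
        (gradS S (z j t x) ⬝ᵥ ztD k z j t x
          - (1/2) * (K.mulVec (ztxD k z j t x) ⬝ᵥ z j t x
            + K.mulVec (zxD k z j t x) ⬝ᵥ ztD k z j t x)))
      + (1/2) * ∑ j ∈ Finset.range N,
          (K.mulVec (atD N k xs z j t) ⬝ᵥ jmpv N xs z j t
            + K.mulVec (avgv N xs z j t) ⬝ᵥ jtD N k xs z j t
            + (A.mulVec (jtD N k xs z j t) ⬝ᵥ jmpv N xs z j t
              + A.mulVec (jmpv N xs z j t) ⬝ᵥ jtD N k xs z j t))) t := by
    refine HasDerivAt.add (HasDerivAt.fun_sum fun j hj' => ?_)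
      ((HasDerivAt.fun_sum fun j hj' =>
        hasDerivAt_Qterm xs hz hN (Finset.mem_range.1 hj') t K A).const_mul (1/2 : ℝ))
    exact hasDerivAt_intInt (contDiff_H hS hz (Finset.mem_range.1 hj'))
      (fun s x => hasDerivAt_Ht hS hz (Finset.mem_range.1 hj') s x) (xs j) (xs (j+1)) t
  rw [hD.deriv]
  have hcell : ∀ j ∈ Finset.range N,
      (∫ x in (xs j)..(xs (j+1)),
        (gradS S (z j t x) ⬝ᵥ ztD k z j t x
          - (1/2) * (K.mulVec (ztxD k z j t x) ⬝ᵥ z j t x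
            + K.mulVec (zxD k z j t x) ⬝ᵥ ztD k z j t x)))
      = ((1/2) * (K.mulVec (ztD k z j t (xs (j+1))) ⬝ᵥ z j t (xs (j+1)))
          + numFluxv N xs K A B z j t ⬝ᵥ ztD k z j t (xs (j+1)))
        - ((1/2) * (K.mulVec (ztD k z j t (xs j)) ⬝ᵥ z j t (xs j))
          + numFluxv N xs K A B z (lidx N j) t ⬝ᵥ ztD k z j t (xs j)) :=
    fun j hj' => cellD xs M K A B hN hM hK hS hz hscheme (Finset.mem_range.1 hj') t
  rw [Finset.sum_congr rfl hcell, Finset.sum_sub_distrib]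
  have hLsum : (∑ j ∈ Finset.range N,
        ((1/2) * (K.mulVec (ztD k z j t (xs j)) ⬝ᵥ z j t (xs j))
          + numFluxv N xs K A B z (lidx N j) t ⬝ᵥ ztD k z j t (xs j)))
      = ∑ j ∈ Finset.range N,
        ((1/2) * (K.mulVec (ptD N k xs z j t) ⬝ᵥ trRv N xs z j t)
          + numFluxv N xs K A B z j t ⬝ᵥ ptD N k xs z j t) := by
    refine Finset.sum_bij' (fun j _ => lidx N j) (fun i _ => (i+1) % N)
      (fun j hj' => Finset.mem_range.2 (Nat.mod_lt _ hN))
      (fun i hi' => Finset.mem_range.2 (Nat.mod_lt _ hN))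
      (fun j hj' => lidx_succ hN (Finset.mem_range.1 hj'))
      (fun i hi' => succ_lidx hN (Finset.mem_range.1 hi'))
      (fun j hj' => ?_)
    have hjN := Finset.mem_range.1 hj'
    simp only [ptD, trRv, lidx_succ hN hjN]
  rw [hLsum, Finset.mul_sum, ← Finset.sum_sub_distrib, ← Finset.sum_add_distrib]
  refine Finset.sum_eq_zero fun j hj' => ?_
  have hjN := Finset.mem_range.1 hj'
  rw [numFluxv_eq xs hz hN hjN t K A B]
  simp only [ptD, qtD, jtD, atD, trRv, trLv, avgv, jmpv]
  have hk := key_alg hK hA hB (z ((j+1) % N) t (xs ((j+1) % N))) (z j t (xs (j+1)))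
    (ztD k z ((j+1) % N) t (xs ((j+1) % N))) (ztD k z j t (xs (j+1)))
  linarith [hk]
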